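/- Parametrize the circle C by Psi(theta) = (1/3 + (1/3)cos(theta), 1/3 - (1/6)cos(theta) + (1/(2 sqrt(3))) sin(theta), 1/3 - (1/6)cos(theta) - (1/(2 sqrt(3))) sin(theta)). Then: (i) for every theta in the open interval (-pi, pi), B_0(Psi(theta)) = Psi(g_0(theta)) where g_0(theta) = 2 arctan((1/3) tan(theta/2)); equivalently, cos(g_0(theta)) = (5 cos(theta) + 4)/(4 cos(theta) + 5) and sin(g_0(theta)) = 3 sin(theta)/(4 cos(theta) + 5); and (ii) the fixed points of B_0 in the closed disk D are exactly the two boundary points Psi(0) = (2/3, 1/6, 1/6) and Psi(pi) = (0, 1/2, 1/2). -/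

import Mathlib

open Real

/-- The rational map `B₀(x,y,z) = (9x, 2x+2y-z, 2x-y+2z)/(13x+y+z)`. -/
noncomputable def B0map (p : ℝ × ℝ × ℝ) : ℝ × ℝ × ℝ :=
  (9 * p.1 / (13 * p.1 + p.2.1 + p.2.2),
   (2 * p.1 + 2 * p.2.1 - p.2.2) / (13 * p.1 + p.2.1 + p.2.2),
   (2 * p.1 - p.2.1 + 2 * p.2.2) / (13 * p.1 + p.2.1 + p.2.2))

/-- The closed disk `D` of radius `1/√6` centered at `(1/3,1/3,1/3)` in the plane
`x + y + z = 1`. -/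
def Ddisk : Set (ℝ × ℝ × ℝ) :=
  {p | p.1 + p.2.1 + p.2.2 = 1 ∧
    (p.1 - 1 / 3) ^ 2 + (p.2.1 - 1 / 3) ^ 2 + (p.2.2 - 1 / 3) ^ 2 ≤ 1 / 6}

/-- The boundary circle `C` of the disk `D`. -/
def Ccirc : Set (ℝ × ℝ × ℝ) :=
  {p | p.1 + p.2.1 + p.2.2 = 1 ∧
    (p.1 - 1 / 3) ^ 2 + (p.2.1 - 1 / 3) ^ 2 + (p.2.2 - 1 / 3) ^ 2 = 1 / 6}

/-- The parametrization `Ψ(θ)` of the boundary circle `C`. -/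
noncomputable def Psi (θ : ℝ) : ℝ × ℝ × ℝ :=
  (1 / 3 + (1 / 3) * cos θ,
   1 / 3 - (1 / 6) * cos θ + (1 / (2 * Real.sqrt 3)) * sin θ,
   1 / 3 - (1 / 6) * cos θ - (1 / (2 * Real.sqrt 3)) * sin θ)

/-- The circle map `g₀(θ) = 2 arctan((1/3) tan(θ/2))`. -/
noncomputable def g0 (θ : ℝ) : ℝ :=
  2 * arctan ((1 / 3) * tan (θ / 2))

/-! In the half-angle coordinate `t = tan (θ / 2)` the parametrization `Ψ` is rational, and
`B₀` restricted to the circle becomes `t ↦ t / 3`, which is exactly `g₀`. On the plane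
`x + y + z = 1` the first coordinate of a fixed point satisfies `x (3x - 2) = 0`, and the two
remaining (linear) equations then pin down `Ψ(π)` and `Ψ(0)`. -/

theorem cos_two_mul_arctan (x : ℝ) : cos (2 * arctan x) = (1 - x ^ 2) / (1 + x ^ 2) := by
  rw [cos_two_mul, cos_sq_arctan]
  field_simp
  ring

theorem sin_two_mul_arctan (x : ℝ) : sin (2 * arctan x) = 2 * x / (1 + x ^ 2) := by
  rw [sin_two_mul, sin_arctan, cos_arctan, mul_assoc, div_mul_div_comm, mul_one,
    mul_self_sqrt (by positivity)]
  ring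

theorem four_mul_cos_add_five_eq {θ : ℝ} (hθ : cos θ ≠ -1) :
    4 * cos θ + 5 = (9 + tan (θ / 2) ^ 2) / (1 + tan (θ / 2) ^ 2) := by
  rw [cos_eq_two_mul_tan_half_div_one_sub_tan_half_sq θ hθ]
  have : 0 < 1 + tan (θ / 2) ^ 2 := by positivity
  field_simp
  ring

theorem cos_g0 {θ : ℝ} (hθ : cos θ ≠ -1) :
    cos (g0 θ) = (5 * cos θ + 4) / (4 * cos θ + 5) := by
  rw [four_mul_cos_add_five_eq hθ, g0, cos_two_mul_arctan,
    cos_eq_two_mul_tan_half_div_one_sub_tan_half_sq θ hθ]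
  have : 0 < 1 + tan (θ / 2) ^ 2 := by positivity
  field_simp
  ring

theorem sin_g0 {θ : ℝ} (hθ : cos θ ≠ -1) : sin (g0 θ) = 3 * sin θ / (4 * cos θ + 5) := by
  rw [four_mul_cos_add_five_eq hθ, g0, sin_two_mul_arctan,
    sin_eq_two_mul_tan_half_div_one_add_tan_half_sq θ]
  have : 0 < 1 + tan (θ / 2) ^ 2 := by positivity
  field_simp
  ring

theorem cos_ne_neg_one_of_mem_Ioo {θ : ℝ} (hθ : θ ∈ Set.Ioo (-π) π) : cos θ ≠ -1 := by
  have hhalf : 0 < cos (θ / 2) := cos_pos_of_mem_Ioo ⟨by linarith [hθ.1], by linarith [hθ.2]⟩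
  have hdouble : cos θ = 2 * cos (θ / 2) ^ 2 - 1 := by rw [← cos_two_mul]; ring_nf
  nlinarith

theorem B0map_Psi_eq_Psi {θ φ : ℝ} (hcos : cos φ = (5 * cos θ + 4) / (4 * cos θ + 5))
    (hsin : sin φ = 3 * sin θ / (4 * cos θ + 5)) : B0map (Psi θ) = Psi φ := by
  have hden : 13 * (Psi θ).1 + (Psi θ).2.1 + (Psi θ).2.2 = 4 * cos θ + 5 := by
    simp only [Psi]
    ring
  have hden_pos : 0 < 4 * cos θ + 5 := by linarith [neg_one_le_cos θ]
  rw [eq_div_iff hden_pos.ne'] at hcos hsin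
  simp only [B0map, hden, Prod.ext_iff, div_eq_iff hden_pos.ne']
  simp only [Psi]
  refine ⟨?_, ?_, ?_⟩
  · linear_combination -hcos / 3
  · linear_combination hcos / 6 - hsin / (2 * √3)
  · linear_combination hcos / 6 + hsin / (2 * √3)

theorem Psi_zero : Psi 0 = (2 / 3, 1 / 6, 1 / 6) := by
  norm_num [Psi]

theorem Psi_pi : Psi π = (0, 1 / 2, 1 / 2) := by
  norm_num [Psi]

theorem B0map_eq_self_iff {x y z : ℝ} (hplane : x + y + z = 1) (hden : 13 * x + y + z ≠ 0) :
    B0map (x, y, z) = (x, y, z) ↔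
      (x, y, z) = (2 / 3, 1 / 6, 1 / 6) ∨ (x, y, z) = (0, 1 / 2, 1 / 2) := by
  simp only [B0map, Prod.mk.injEq, div_eq_iff hden]
  constructor
  · rintro ⟨e1, e2, e3⟩
    -- on the plane the first coordinate reads `9 x = x (12 x + 1)`
    have hx : x * (3 * x - 2) = 0 := by linear_combination (-e1 - x * hplane) / 4
    rcases mul_eq_zero.mp hx with hx | hx
    · subst hx
      right
      refine ⟨rfl, ?_, ?_⟩ <;> nlinarith
    · left
      refine ⟨by linarith, ?_, ?_⟩ <;> nlinarith
  · rintro (⟨rfl, rfl, rfl⟩ | ⟨rfl, rfl, rfl⟩) <;> norm_num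

theorem thirteen_mul_add_add_pos_of_mem_Ddisk {p : ℝ × ℝ × ℝ} (hp : p ∈ Ddisk) :
    0 < 13 * p.1 + p.2.1 + p.2.2 := by
  obtain ⟨hplane, hdisk⟩ := hp
  nlinarith [sq_nonneg (p.2.1 - 1 / 3), sq_nonneg (p.2.2 - 1 / 3)]

/-- (i) For every `θ ∈ (-π, π)`, `B₀(Ψ(θ)) = Ψ(g₀(θ))`; equivalently
`cos(g₀(θ)) = (5cos θ + 4)/(4cos θ + 5)` and `sin(g₀(θ)) = 3 sin θ/(4cos θ + 5)`.
(ii) The fixed points of `B₀` in the closed disk `D` are exactly the two boundary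
points `Ψ(0) = (2/3, 1/6, 1/6)` and `Ψ(π) = (0, 1/2, 1/2)`. -/
theorem stmt_18 :
    (∀ θ ∈ Set.Ioo (-π) π,
      B0map (Psi θ) = Psi (g0 θ) ∧
      cos (g0 θ) = (5 * cos θ + 4) / (4 * cos θ + 5) ∧
      sin (g0 θ) = 3 * sin θ / (4 * cos θ + 5)) ∧
    (∀ p ∈ Ddisk, B0map p = p ↔ p = Psi 0 ∨ p = Psi π) ∧
    Psi 0 = (2 / 3, 1 / 6, 1 / 6) ∧
    Psi π = (0, 1 / 2, 1 / 2) := by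
  refine ⟨fun θ hθ ↦ ?_, fun p hp ↦ ?_, Psi_zero, Psi_pi⟩
  · have hcos := cos_g0 (cos_ne_neg_one_of_mem_Ioo hθ)
    have hsin := sin_g0 (cos_ne_neg_one_of_mem_Ioo hθ)
    exact ⟨B0map_Psi_eq_Psi hcos hsin, hcos, hsin⟩
  · rw [Psi_zero, Psi_pi]
    exact B0map_eq_self_iff hp.1 (thirteen_mul_add_add_pos_of_mem_Ddisk hp).ne'
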